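/- Let E be a finite set and α : 2^E → 2^E an operator. Then α is the rank closure operator of some greedoid on E if and only if α satisfies: (G1) X ⊆ α(X) for all X ⊆ E (extensivity); (G2) X ⊆ Y ⊆ α(X) implies α(X) = α(Y) (self-convexity); and (G3) for all X ⊆ E and distinct x, y ∉ X, if α(X ∪ {y}) = α(X ∪ {x, y}) but α(X ∪ {x}) ≠ α(X ∪ {x, y}), then there exists z ∈ X ∪ {x} with α(X ∪ {x} \ {z}) = α(X ∪ {x}). -/

import Mathlib

/-!
For a greedoid, (G1) and (G2) follow from the augmentation axiom through the rank. For (G3): if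
`r (X ∪ {x}) < |X ∪ {x}|`, some element of `X ∪ {x}` can be dropped without changing the rank,
hence the closure; otherwise the hypotheses force `r (X ∪ {x, y})` to be both `|X| + 2` (as
`y ∉ σ (X ∪ {x})`) and at most `r (X ∪ {y}) ≤ |X| + 1` (as `x ∈ σ (X ∪ {y})`).

Conversely the greedoid is recovered from `α` as its *accessible* sets, those built by repeatedly
adjoining an element outside the current closure. The heart of the matter is that accessible
`A`, `C` with `C ⊆ α A` satisfy `|C| ≤ |A|`: by induction on `|C|`, split off the first element
`c` of `C` and pass to the contraction `Y ↦ α (insert c Y)`, in which a maximal accessible subset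
`B` of `A` spans `α A` but misses an element of `A`, so that `|C| - 1 ≤ |B| < |A|`. This
inequality gives the augmentation axiom, and it computes the rank of `X` as the size of any
accessible `B ⊆ X` with `X ⊆ α B`, whence the rank closure is `α`.
-/

/-- A greedoid on `E`: `∅` is feasible and larger feasible sets augment smaller ones. -/
def IsGreedoid {E : Type*} (F : Set (Set E)) : Prop :=
  ∅ ∈ F ∧ ∀ X ∈ F, ∀ Y ∈ F, Y.ncard < X.ncard → ∃ x ∈ X \ Y, insert x Y ∈ F

/-- The rank function of a set system: `r X = max {|A| : A ⊆ X, A ∈ F}`. -/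
noncomputable def greedoidRank {E : Type*} (F : Set (Set E)) (X : Set E) : ℕ :=
  sSup {n | ∃ A ∈ F, A ⊆ X ∧ A.ncard = n}

/-- The rank closure operator `σ X = {x : r (X ∪ {x}) = r X}`. -/
noncomputable def rankClosure {E : Type*} (F : Set (Set E)) (X : Set E) : Set E :=
  {x | greedoidRank F (insert x X) = greedoidRank F X}

open Set

section Rank

variable {E : Type*} {F : Set (Set E)} {A X Y Z : Set E} {z : E}

lemma greedoidRank_bddAbove [Finite E] (F : Set (Set E)) (X : Set E) :
    BddAbove {n | ∃ A ∈ F, A ⊆ X ∧ A.ncard = n} :=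
  ⟨X.ncard, by rintro _ ⟨A, -, hAX, rfl⟩; exact ncard_le_ncard hAX (toFinite X)⟩

lemma le_greedoidRank [Finite E] (hA : A ∈ F) (hAX : A ⊆ X) : A.ncard ≤ greedoidRank F X :=
  le_csSup (greedoidRank_bddAbove F X) ⟨A, hA, hAX, rfl⟩

lemma greedoidRank_le {m : ℕ} (h : ∀ A ∈ F, A ⊆ X → A.ncard ≤ m) : greedoidRank F X ≤ m :=
  csSup_le' (by rintro _ ⟨A, hA, hAX, rfl⟩; exact h A hA hAX)

lemma exists_basis [Finite E] (h0 : ∅ ∈ F) (X : Set E) :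
    ∃ B ∈ F, B ⊆ X ∧ B.ncard = greedoidRank F X :=
  Nat.sSup_mem (s := {n | ∃ A ∈ F, A ⊆ X ∧ A.ncard = n})
    ⟨0, ∅, h0, empty_subset X, ncard_empty E⟩ (greedoidRank_bddAbove F X)

lemma greedoidRank_mono [Finite E] (hXY : X ⊆ Y) : greedoidRank F X ≤ greedoidRank F Y :=
  greedoidRank_le fun _ hA hAX => le_greedoidRank hA (hAX.trans hXY)

lemma greedoidRank_le_ncard [Finite E] (X : Set E) : greedoidRank F X ≤ X.ncard :=
  greedoidRank_le fun _ _ hAX => ncard_le_ncard hAX (toFinite X)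

lemma mem_rankClosure_iff_le [Finite E] :
    z ∈ rankClosure F X ↔ greedoidRank F (insert z X) ≤ greedoidRank F X :=
  ⟨le_of_eq, fun h => le_antisymm h (greedoidRank_mono (subset_insert z X))⟩

lemma subset_rankClosure (X : Set E) : X ⊆ rankClosure F X := fun z hz =>
  show greedoidRank F (insert z X) = _ by rw [insert_eq_of_mem hz]

lemma greedoidRank_le_of_subset_rankClosure [Finite E] (hF : IsGreedoid F)
    (hZ : Z ⊆ rankClosure F X) : greedoidRank F Z ≤ greedoidRank F X := by
  obtain ⟨B, hB, hBX, hBr⟩ := exists_basis hF.1 X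
  refine greedoidRank_le fun C hC hCZ => ?_
  by_contra! hlt
  obtain ⟨u, hu, huB⟩ := hF.2 C hC B hB (hBr ▸ hlt)
  have hrank := le_greedoidRank huB (insert_subset_insert hBX)
  rw [ncard_insert_of_notMem hu.2, (hZ (hCZ hu.1) : greedoidRank F (insert u X) = _)] at hrank
  omega

lemma rankClosure_eq_of_subset [Finite E] (hF : IsGreedoid F) (hXY : X ⊆ Y)
    (hY : Y ⊆ rankClosure F X) : rankClosure F X = rankClosure F Y := by
  have hr : greedoidRank F Y = greedoidRank F X :=
    le_antisymm (greedoidRank_le_of_subset_rankClosure hF hY) (greedoidRank_mono hXY)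
  ext z
  rw [mem_rankClosure_iff_le, mem_rankClosure_iff_le, hr]
  constructor
  · intro hz
    exact greedoidRank_le_of_subset_rankClosure hF
      (insert_subset (mem_rankClosure_iff_le.2 hz) hY)
  · exact (greedoidRank_mono (insert_subset_insert hXY)).trans

lemma rankClosure_sdiff_singleton_eq [Finite E] (hF : IsGreedoid F)
    (hz : greedoidRank F (A \ {z}) = greedoidRank F A) :
    rankClosure F (A \ {z}) = rankClosure F A :=
  rankClosure_eq_of_subset hF sdiff_subset fun _ hw =>
    mem_rankClosure_iff_le.2 (hz ▸ greedoidRank_mono (insert_subset hw sdiff_subset))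

lemma exists_rankClosure_sdiff_singleton_eq [Finite E] (hF : IsGreedoid F)
    (hA : greedoidRank F A < A.ncard) : ∃ z ∈ A, rankClosure F (A \ {z}) = rankClosure F A := by
  obtain ⟨B, hB, hBA, hBr⟩ := exists_basis hF.1 A
  obtain ⟨z, hzA, hzB⟩ : ∃ z ∈ A, z ∉ B :=
    not_subset.1 fun hAB => (ncard_le_ncard hAB (toFinite B)).not_gt (hBr ▸ hA)
  refine ⟨z, hzA, rankClosure_sdiff_singleton_eq hF ?_⟩
  exact le_antisymm (greedoidRank_mono sdiff_subset)
    (hBr ▸ le_greedoidRank hB (subset_sdiff_singleton hBA hzB))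

end Rank

namespace Greedoid

variable {E : Type*} (α : Set E → Set E)

def IsExtensive : Prop := ∀ X, X ⊆ α X

def IsSelfConvex : Prop := ∀ X Y : Set E, X ⊆ Y → Y ⊆ α X → α X = α Y

def HasExchange : Prop :=
  ∀ (X : Set E) (x y : E), x ≠ y → x ∉ X → y ∉ X →
    α (insert y X) = α (insert x (insert y X)) →
    α (insert x X) ≠ α (insert x (insert y X)) →
    ∃ z ∈ insert x X, α ((insert x X) \ {z}) = α (insert x X)

inductive Accessible : Set E → Prop
  | empty : Accessible ∅
  | insert_of_notMem {A : Set E} {x : E} : Accessible A → x ∉ α A → Accessible (insert x A)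

def IsFree (A : Set E) : Prop := ∀ z ∈ A, z ∉ α (A \ {z})

/-- The form of (G3) that passes to contractions. -/
def HasWeakExchange : Prop :=
  ∀ (X : Set E) (x y : E), x ≠ y → x ∉ X → y ∉ X →
    Accessible α (insert x X) → IsFree α (insert x X) →
    x ∈ α (insert y X) → y ∈ α (insert x X)

def contract (c : E) (Y : Set E) : Set E := α (insert c Y)

lemma hasExchange_rankClosure [Finite E] {F : Set (Set E)} (hF : IsGreedoid F) :
    HasExchange (rankClosure F) := by
  intro X x y _ hxX hyX h1 h2
  obtain hlt | heq := (greedoidRank_le_ncard (F := F) (insert x X)).lt_or_eq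
  · exact exists_rankClosure_sdiff_singleton_eq hF hlt
  have hy : y ∉ rankClosure F (insert x X) := fun hy => h2 <| by
    rw [insert_comm x y]
    exact rankClosure_eq_of_subset hF (subset_insert y _) (insert_subset hy (subset_rankClosure _))
  have hx : x ∈ rankClosure F (insert y X) := h1 ▸ subset_rankClosure _ (mem_insert x _)
  have hrank : greedoidRank F (insert y (insert x X)) ≤ X.ncard + 1 := calc
    _ = greedoidRank F (insert y X) := by rw [insert_comm]; exact hx
    _ ≤ (insert y X).ncard := greedoidRank_le_ncard _
    _ = X.ncard + 1 := ncard_insert_of_notMem hyX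
  rw [mem_rankClosure_iff_le, heq, ncard_insert_of_notMem hxX] at hy
  omega

variable {α} {A B C D X : Set E} {c z : E}

lemma IsSelfConvex.insert_eq (h1 : IsExtensive α) (h2 : IsSelfConvex α) (hz : z ∈ α X) :
    α (insert z X) = α X :=
  (h2 X (insert z X) (subset_insert z X) (insert_subset hz (h1 X))).symm

lemma HasExchange.hasWeakExchange (h1 : IsExtensive α) (h2 : IsSelfConvex α)
    (h3 : HasExchange α) : HasWeakExchange α := by
  intro X x y hxy hxX hyX _ hfree hx
  by_contra hy
  have hxy_eq : α (insert y X) = α (insert x (insert y X)) :=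
    h2 _ _ (subset_insert x _) (insert_subset hx (h1 _))
  have hxy_ne : α (insert x X) ≠ α (insert x (insert y X)) := fun h =>
    hy (h ▸ h1 _ (mem_insert_of_mem x (mem_insert y X)))
  obtain ⟨z, hz, hzeq⟩ := h3 X x y hxy hxX hyX hxy_eq hxy_ne
  exact hfree z hz (hzeq ▸ h1 _ hz)

lemma Accessible.isFree (h1 : IsExtensive α) (h3 : HasWeakExchange α) (hA : Accessible α A) :
    IsFree α A := by
  induction hA with
  | empty => simp [IsFree]
  | @insert_of_notMem A x hA hx ih =>
    have hxA : x ∉ A := fun h => hx (h1 A h)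
    rintro z hz hzx
    obtain rfl | hzA := mem_insert_iff.1 hz
    · rw [insert_sdiff_self_of_notMem hxA] at hzx
      exact hx hzx
    · have hzx_ne : z ≠ x := fun h => hxA (h ▸ hzA)
      have hA_eq : insert z (A \ {z}) = A := by rw [insert_sdiff_singleton, insert_eq_of_mem hzA]
      rw [← insert_sdiff_singleton_comm hzx_ne.symm] at hzx
      have := h3 (A \ {z}) z x hzx_ne (by simp) (fun h => hxA h.1)
        (by rwa [hA_eq]) (by rwa [hA_eq]) hzx
      exact hx (hA_eq ▸ this)

lemma Accessible.notMem_of_insert (h1 : IsExtensive α) (h3 : HasWeakExchange α)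
    (hzA : z ∉ A) (h : Accessible α (insert z A)) : z ∉ α A := by
  simpa [insert_sdiff_self_of_notMem hzA] using h.isFree h1 h3 z (mem_insert z A)

lemma IsExtensive.contract (h1 : IsExtensive α) (c : E) : IsExtensive (contract α c) :=
  fun X => (subset_insert c X).trans (h1 _)

lemma IsSelfConvex.contract (h1 : IsExtensive α) (h2 : IsSelfConvex α) (c : E) :
    IsSelfConvex (contract α c) := fun X Y hXY hY =>
  h2 (insert c X) (insert c Y) (insert_subset_insert hXY)
    (insert_subset (h1 _ (mem_insert c X)) hY)

lemma Accessible.of_contract (h1 : IsExtensive α) (hc : c ∉ α ∅)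
    (hD : Accessible (contract α c) D) : c ∉ D ∧ Accessible α (insert c D) := by
  induction hD with
  | empty => exact ⟨notMem_empty c, Accessible.empty.insert_of_notMem hc⟩
  | @insert_of_notMem D x hD hx ih =>
    have hxc : x ≠ c := by
      rintro rfl
      exact hx (h1 _ (mem_insert x D))
    refine ⟨fun h => (mem_insert_iff.1 h).elim (fun h => hxc h.symm) ih.1, ?_⟩
    rw [insert_comm]
    exact ih.2.insert_of_notMem hx

lemma HasWeakExchange.contract (h1 : IsExtensive α) (h3 : HasWeakExchange α) (hc : c ∉ α ∅) :
    HasWeakExchange (contract α c) := by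
  intro X x y hxy hxX hyX hacc _ hx
  obtain ⟨hcX, hacc⟩ := hacc.of_contract h1 hc
  by_cases hyc : y = c
  · subst hyc
    exact h1 _ (mem_insert y _)
  have hx' : x ∉ insert c X := fun h =>
    (mem_insert_iff.1 h).elim (fun h => hcX (h ▸ mem_insert x X)) hxX
  have hy' : y ∉ insert c X := fun h => (mem_insert_iff.1 h).elim hyc hyX
  rw [insert_comm] at hacc
  have := h3 (insert c X) x y hxy hx' hy' hacc (hacc.isFree h1 h3)
    (by rw [insert_comm y c X]; exact hx)
  rw [insert_comm x c X] at this
  exact this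

lemma Accessible.eq_empty_or_exists_contract (hC : Accessible α C) :
    C = ∅ ∨ ∃ c D, c ∉ α ∅ ∧ Accessible (contract α c) D ∧ C = insert c D := by
  induction hC with
  | empty => exact Or.inl rfl
  | @insert_of_notMem A x hA hx ih =>
    right
    obtain rfl | ⟨c, D, hc, hD, rfl⟩ := ih
    · exact ⟨x, ∅, hx, Accessible.empty, rfl⟩
    · exact ⟨c, insert x D, hc, hD.insert_of_notMem hx, insert_comm x c D⟩

lemma exists_accessible_subset [Finite E] (h1 : IsExtensive α) (A : Set E) :
    ∃ B, Accessible α B ∧ B ⊆ A ∧ A ⊆ α B := by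
  obtain ⟨B, hB, hmax⟩ := (toFinite {D | Accessible α D ∧ D ⊆ A}).exists_maximalFor id _
    ⟨∅, Accessible.empty, empty_subset A⟩
  refine ⟨B, hB.1, hB.2, fun w hw => ?_⟩
  by_contra hwB
  have : insert w B ⊆ B :=
    hmax ⟨hB.1.insert_of_notMem hwB, insert_subset hw hB.2⟩ (subset_insert w B)
  exact hwB (h1 B (this (mem_insert w B)))

-- The binders are not taken from `variable`, since the recursive call changes `α`.
theorem Accessible.ncard_le [Finite E] {α : Set E → Set E} {A C : Set E} (h1 : IsExtensive α)
    (h2 : IsSelfConvex α) (h3 : HasWeakExchange α) (hA : Accessible α A) (hC : Accessible α C)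
    (hCA : C ⊆ α A) : C.ncard ≤ A.ncard := by
  obtain rfl | ⟨c, D, hc, hD, hCD⟩ := hC.eq_empty_or_exists_contract
  · simp
  have hcD := (hD.of_contract h1 hc).1
  rw [hCD] at hCA ⊢
  have hcA : c ∈ α A := hCA (mem_insert c D)
  obtain ⟨B, hB, hBA, hAB⟩ := exists_accessible_subset (h1.contract c) A
  have hαB : contract α c B = α A :=
    (h2.contract h1 c B A hBA hAB).trans (h2.insert_eq h1 hcA)
  have hDB : D.ncard ≤ B.ncard :=
    Accessible.ncard_le (h1.contract c) (h2.contract h1 c) (h3.contract h1 hc) hB hD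
      (hαB ▸ (subset_insert c D).trans hCA)
  have hBA' : B ⊂ A := hBA.ssubset_of_ne <| by
    rintro rfl
    obtain ⟨hcB, hacc⟩ := hB.of_contract h1 hc
    exact hacc.notMem_of_insert h1 h3 hcB hcA
  have := ncard_lt_ncard hBA' (toFinite A)
  rw [ncard_insert_of_notMem hcD]
  omega
termination_by C.ncard
decreasing_by rw [hCD, ncard_insert_of_notMem hcD]; omega

lemma isGreedoid_accessible [Finite E] (h1 : IsExtensive α) (h2 : IsSelfConvex α)
    (h3 : HasWeakExchange α) : IsGreedoid {A | Accessible α A} := by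
  refine ⟨Accessible.empty, fun X hX Y hY hlt => ?_⟩
  by_contra! h
  have hXY : X ⊆ α Y := fun w hw => by
    by_contra hw'
    exact h w ⟨hw, fun hwY => hw' (h1 Y hwY)⟩ (hY.insert_of_notMem hw')
  exact (Accessible.ncard_le h1 h2 h3 hY hX hXY).not_gt hlt

lemma greedoidRank_accessible_eq [Finite E] (h1 : IsExtensive α) (h2 : IsSelfConvex α)
    (h3 : HasWeakExchange α) (hB : Accessible α B) (hBX : B ⊆ X) (hXB : X ⊆ α B) :
    greedoidRank {A | Accessible α A} X = B.ncard :=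
  le_antisymm
    (greedoidRank_le fun _ hA hAX => Accessible.ncard_le h1 h2 h3 hB hA (hAX.trans hXB))
    (le_greedoidRank hB hBX)

lemma rankClosure_accessible [Finite E] (h1 : IsExtensive α) (h2 : IsSelfConvex α)
    (h3 : HasWeakExchange α) : rankClosure {A | Accessible α A} = α := by
  funext X
  ext z
  obtain ⟨B, hB, hBX, hXB⟩ := exists_accessible_subset h1 X
  have hαB : α B = α X := h2 B X hBX hXB
  have hrX := greedoidRank_accessible_eq h1 h2 h3 hB hBX hXB
  by_cases hz : z ∈ α X
  · refine iff_of_true ?_ hz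
    show greedoidRank _ (insert z X) = greedoidRank _ X
    rw [hrX, greedoidRank_accessible_eq h1 h2 h3 hB (hBX.trans (subset_insert z X))
      (insert_subset (hαB ▸ hz) hXB)]
  · refine iff_of_false (fun hr => ?_) hz
    have hzB : z ∉ α B := hαB ▸ hz
    have hlt := le_greedoidRank (F := {A | Accessible α A}) (hB.insert_of_notMem hzB)
      (insert_subset_insert hBX)
    rw [ncard_insert_of_notMem fun h => hzB (h1 B h), ← hrX] at hlt
    exact (mem_rankClosure_iff_le.1 hr).not_gt hlt

end Greedoid

open Greedoid in
theorem stmt15 {E : Type*} [Fintype E] (α : Set E → Set E) :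
    (∃ F : Set (Set E), IsGreedoid F ∧ α = rankClosure F) ↔
      ((∀ X : Set E, X ⊆ α X) ∧
       (∀ X Y : Set E, X ⊆ Y → Y ⊆ α X → α X = α Y) ∧
       (∀ (X : Set E) (x y : E), x ≠ y → x ∉ X → y ∉ X →
         α (insert y X) = α (insert x (insert y X)) →
         α (insert x X) ≠ α (insert x (insert y X)) →
         ∃ z ∈ insert x X, α ((insert x X) \ {z}) = α (insert x X))) := by
  constructor
  · rintro ⟨F, hF, rfl⟩
    exact ⟨subset_rankClosure, fun _ _ => rankClosure_eq_of_subset hF, hasExchange_rankClosure hF⟩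
  · rintro ⟨h1, h2, h3⟩
    have h3' : HasWeakExchange α := HasExchange.hasWeakExchange h1 h2 h3
    exact ⟨_, isGreedoid_accessible h1 h2 h3', (rankClosure_accessible h1 h2 h3').symm⟩
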